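/- Assume char k ≠ 2. For every z ∈ Z_ℓ and every ℓ×d matrix y over k there exist blocks x, y', w such that the block matrix [[z, y, x],[0, I_d, y'],[0, 0, w]] lies in V_ℓ. Equivalently, the projection map V_ℓ → Z_ℓ × Mat_{ℓ×d}(k) sending an element of V_ℓ to its pair of blocks (z, y) is surjective. -/

import Mathlib

open Matrix

noncomputable section

/-- Index type for the 3-block decomposition of size `ℓ + d + ℓ`. -/
abbrev Idx (ℓ d : ℕ) : Type := Fin ℓ ⊕ (Fin d ⊕ Fin ℓ)

variable {k : Type*} [Field k]

/-- The `n × n` matrix built out of nine blocks of sizes `ℓ, d, ℓ`. -/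
def blk3 {ℓ d : ℕ}
    (A : Matrix (Fin ℓ) (Fin ℓ) k) (B : Matrix (Fin ℓ) (Fin d) k) (C : Matrix (Fin ℓ) (Fin ℓ) k)
    (D : Matrix (Fin d) (Fin ℓ) k) (E : Matrix (Fin d) (Fin d) k) (F : Matrix (Fin d) (Fin ℓ) k)
    (G : Matrix (Fin ℓ) (Fin ℓ) k) (H : Matrix (Fin ℓ) (Fin d) k) (I : Matrix (Fin ℓ) (Fin ℓ) k) :
    Matrix (Idx ℓ d) (Idx ℓ d) k :=
  Matrix.fromBlocks A (Matrix.fromCols B C) (Matrix.fromRows D G) (Matrix.fromBlocks E F H I)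

/-- The `ℓ × ℓ` exchange matrix `K` (ones on the antidiagonal). -/
def exK (k : Type*) [Field k] (ℓ : ℕ) : Matrix (Fin ℓ) (Fin ℓ) k :=
  Matrix.of fun i j => if (i : ℕ) + (j : ℕ) = ℓ - 1 then 1 else 0

/-- The symmetric matrix `J = [[0,0,K],[0,J',0],[K,0,0]]`. -/
def Jmat {d : ℕ} (ℓ : ℕ) (J' : Matrix (Fin d) (Fin d) k) : Matrix (Idx ℓ d) (Idx ℓ d) k :=
  blk3 0 0 (exK k ℓ) 0 J' 0 (exK k ℓ) 0 0

/-- The special orthogonal group of an invertible symmetric matrix `S`: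
`SO(S) = {g : gᵀ S g = S, det g = 1}`. -/
def SO {m : Type*} [Fintype m] [DecidableEq m] (S : Matrix m m k) : Set (Matrix m m k) :=
  {g | gᵀ * S * g = S ∧ g.det = 1}

/-- Upper unitriangular matrices (the group `Z_ℓ`). -/
def IsUnitri {ℓ : ℕ} (z : Matrix (Fin ℓ) (Fin ℓ) k) : Prop :=
  (∀ i, z i i = 1) ∧ ∀ i j : Fin ℓ, (j : ℕ) < (i : ℕ) → z i j = 0

/-- The unipotent subgroup `V_ℓ ⊆ SO(J)`: elements of `SO(J)` of block form
`[[z, y, x], [0, I, y'], [0, 0, w]]` with `z` upper unitriangular. -/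
def Vl {d : ℕ} (ℓ : ℕ) (J' : Matrix (Fin d) (Fin d) k) :
    Set (Matrix (Idx ℓ d) (Idx ℓ d) k) :=
  {g | g ∈ SO (Jmat ℓ J') ∧ ∃ z y x y' w, IsUnitri z ∧ g = blk3 z y x 0 1 y' 0 0 w}

/-- The top-left `ℓ × ℓ` block `z` of a matrix. -/
def zBlk {ℓ d : ℕ} (g : Matrix (Idx ℓ d) (Idx ℓ d) k) : Matrix (Fin ℓ) (Fin ℓ) k :=
  Matrix.of fun i j => g (Sum.inl i) (Sum.inl j)

/-- The top-middle `ℓ × d` block `y` of a matrix. -/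
def yBlk {ℓ d : ℕ} (g : Matrix (Idx ℓ d) (Idx ℓ d) k) : Matrix (Fin ℓ) (Fin d) k :=
  Matrix.of fun i j => g (Sum.inl i) (Sum.inr (Sum.inl j))

/-- Sum of the superdiagonal entries `Σ_{i} z_{i, i+1}`. -/
def superdiag {ℓ : ℕ} (z : Matrix (Fin ℓ) (Fin ℓ) k) : k :=
  ∑ i : Fin ℓ, ∑ j : Fin ℓ, if (j : ℕ) = (i : ℕ) + 1 then z i j else 0

/-- The last row `y_ℓ` of an `ℓ × d` matrix (as a vector in `k^d`). -/
def lastRow {ℓ d : ℕ} (y : Matrix (Fin ℓ) (Fin d) k) : Fin d → k :=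
  fun j => ∑ i : Fin ℓ, if (i : ℕ) + 1 = ℓ then y i j else 0

/-- The Bessel character `χ_{w0}(g) = ψ(Σ_i z_{i,i+1} + y_ℓ J' w0)`. -/
def besselChar {ℓ d : ℕ} (ψ : AddChar k ℂˣ) (J' : Matrix (Fin d) (Fin d) k) (w0 : Fin d → k)
    (g : Matrix (Idx ℓ d) (Idx ℓ d) k) : ℂˣ :=
  ψ (superdiag (zBlk g) + lastRow (yBlk g) ⬝ᵥ J'.mulVec w0)

/-- The block-diagonal embedding `m : γ ↦ blockdiag(I_ℓ, γ, I_ℓ)`. -/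
def mEmb {d : ℕ} (ℓ : ℕ) (γ : Matrix (Fin d) (Fin d) k) : Matrix (Idx ℓ d) (Idx ℓ d) k :=
  blk3 1 0 0 0 γ 0 0 0 1

/-- The stabilizer `H_{w0} = {γ ∈ SO(J') : γ J' w0 = J' w0}`. -/
def Hstab {d : ℕ} (J' : Matrix (Fin d) (Fin d) k) (w0 : Fin d → k) :
    Set (Matrix (Fin d) (Fin d) k) :=
  {γ | γ ∈ SO J' ∧ γ.mulVec (J'.mulVec w0) = J'.mulVec w0}

/-- The Bessel subgroup `R_ℓ = {m(γ) v : γ ∈ H_{w0}, v ∈ V_ℓ}`. -/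
def Rl {d : ℕ} (ℓ : ℕ) (J' : Matrix (Fin d) (Fin d) k) (w0 : Fin d → k) :
    Set (Matrix (Idx ℓ d) (Idx ℓ d) k) :=
  {g | ∃ γ ∈ Hstab J' w0, ∃ v ∈ Vl ℓ J', g = mEmb ℓ γ * v}

/-- The superdiagonal of `z`, as a vector in `k^{ℓ-1}`. -/
def sdVec {ℓ : ℕ} (z : Matrix (Fin ℓ) (Fin ℓ) k) : Fin (ℓ - 1) → k :=
  fun i => z ⟨(i : ℕ), by have := i.isLt; omega⟩ ⟨(i : ℕ) + 1, by have := i.isLt; omega⟩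

/-- The projection of `V_ℓ` onto its abelianization `k^{ℓ-1} × k^d`,
`g ↦ ((z_{1,2}, …, z_{ℓ-1,ℓ}), y_ℓ)`. -/
def projVl {ℓ d : ℕ} (g : Matrix (Idx ℓ d) (Idx ℓ d) k) : (Fin (ℓ - 1) → k) × (Fin d → k) :=
  (sdVec (zBlk g), lastRow (yBlk g))

/-! Writing `g = [[z, y, x], [0, 1, y'], [0, 0, w]]`, the equation `gᵀ J g = J` splits into
block equations that can be solved one after the other. `zᵀ K w = K` forces `w = K⁻¹ zᵀ⁻¹ K`;
`J' y' = -yᵀ K w` determines `y'` because `J'` is invertible, and its transposed twin then holds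
because `J'` and `K` are symmetric. The last block asks that `wᵀ K x` plus its transpose equal
the symmetric matrix `-y'ᵀ J' y'`, which `wᵀ K x = -½ y'ᵀ J' y'` achieves when `char k ≠ 2`. -/

lemma blk3_mul {R : Type*} [Semiring R] {ℓ d : ℕ}
    (A B C D E F G H I A' B' C' D' E' F' G' H' I' : Matrix _ _ R) :
    blk3 (ℓ := ℓ) (d := d) A B C D E F G H I * blk3 A' B' C' D' E' F' G' H' I' =
      blk3 (A * A' + B * D' + C * G') (A * B' + B * E' + C * H') (A * C' + B * F' + C * I')
        (D * A' + E * D' + F * G') (D * B' + E * E' + F * H') (D * C' + E * F' + F * I')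
        (G * A' + H * D' + I * G') (G * B' + H * E' + I * H') (G * C' + H * F' + I * I') := by
  ext (i | i | i) (j | j | j) <;>
    simp [blk3, mul_apply, Fintype.sum_sum_type, add_assoc]

lemma blk3_transpose {α : Type*} {ℓ d : ℕ} (A B C D E F G H I : Matrix _ _ α) :
    (blk3 (ℓ := ℓ) (d := d) A B C D E F G H I)ᵀ = blk3 Aᵀ Dᵀ Gᵀ Bᵀ Eᵀ Hᵀ Cᵀ Fᵀ Iᵀ := by
  ext (i | i | i) (j | j | j) <;> simp [blk3]

lemma det_blk3_of_upper {R : Type*} [CommRing R] {ℓ d : ℕ} (A B C E F I : Matrix _ _ R) :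
    (blk3 (ℓ := ℓ) (d := d) A B C 0 E F 0 0 I).det = A.det * E.det * I.det := by
  rw [blk3, fromRows_zero, det_fromBlocks_zero₂₁, det_fromBlocks_zero₂₁, mul_assoc]

lemma zBlk_blk3 {α : Type*} {ℓ d : ℕ} (A B C D E F G H I : Matrix _ _ α) :
    zBlk (blk3 (ℓ := ℓ) (d := d) A B C D E F G H I) = A := by
  ext i j; simp [zBlk, blk3]

lemma yBlk_blk3 {α : Type*} {ℓ d : ℕ} (A B C D E F G H I : Matrix _ _ α) :
    yBlk (blk3 (ℓ := ℓ) (d := d) A B C D E F G H I) = B := by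
  ext i j; simp [yBlk, blk3]

lemma exK_eq_permMatrix (ℓ : ℕ) : exK k ℓ = (Fin.revPerm (n := ℓ)).permMatrix k := by
  ext i j
  simp only [exK, of_apply, PEquiv.toMatrix_apply, Equiv.toPEquiv_apply, Option.mem_def,
    Option.some.injEq, Fin.revPerm_apply, Fin.ext_iff, Fin.val_rev]
  have := i.isLt
  exact if_congr (by omega) rfl rfl

lemma exK_transpose (ℓ : ℕ) : (exK k ℓ)ᵀ = exK k ℓ := by
  ext i j
  simp [exK, add_comm]

lemma exK_mul_exK (ℓ : ℕ) : exK k ℓ * exK k ℓ = 1 := by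
  rw [exK_eq_permMatrix, ← permMatrix_mul,
    show Fin.revPerm * Fin.revPerm = 1 from Equiv.ext Fin.rev_rev, permMatrix_one]

lemma isUnit_det_exK (ℓ : ℕ) : IsUnit (exK k ℓ).det :=
  isUnit_det_of_left_inverse (exK_mul_exK ℓ)

lemma IsUnitri.det_eq_one {ℓ : ℕ} {z : Matrix (Fin ℓ) (Fin ℓ) k} (hz : IsUnitri z) :
    z.det = 1 := by
  rw [det_of_isUpperTriangular fun i j h => hz.2 i j h]
  simp [hz.1]

lemma exists_transpose_mul_mul_eq {R n : Type*} [CommRing R] [Fintype n] [DecidableEq n]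
    {z K : Matrix n n R} (hz : IsUnit z.det) (hK : IsUnit K.det) :
    ∃ w, zᵀ * K * w = K ∧ z.det * w.det = 1 := by
  have hzT : IsUnit zᵀ.det := by rwa [det_transpose]
  refine ⟨K⁻¹ * zᵀ⁻¹ * K, ?_, ?_⟩
  · rw [← Matrix.mul_assoc, ← Matrix.mul_assoc, Matrix.mul_assoc zᵀ, mul_nonsing_inv _ hK,
      Matrix.mul_one, mul_nonsing_inv _ hzT, Matrix.one_mul]
  · rw [det_conj' ((isUnit_iff_isUnit_det K).mpr hK), det_nonsing_inv, det_transpose,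
      Ring.mul_inverse_cancel _ hz]

lemma exists_mul_add_transpose_eq {n : Type*} [Fintype n] [DecidableEq n] (h2 : (2 : k) ≠ 0)
    {B S : Matrix n n k} (hB : IsUnit B.det) (hS : Sᵀ = S) : ∃ x, B * x + (B * x)ᵀ = S := by
  refine ⟨B⁻¹ * ((2 : k)⁻¹ • S), ?_⟩
  rw [mul_nonsing_inv_cancel_left _ _ hB, transpose_smul, hS, ← add_smul, ← two_mul,
    mul_inv_cancel₀ h2, one_smul]

lemma blk3_mem_SO_Jmat {ℓ d : ℕ} {J' : Matrix (Fin d) (Fin d) k} (hJ' : J'ᵀ = J')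
    {z x w : Matrix (Fin ℓ) (Fin ℓ) k} {y : Matrix (Fin ℓ) (Fin d) k}
    {y' : Matrix (Fin d) (Fin ℓ) k} (hzw : zᵀ * exK k ℓ * w = exK k ℓ)
    (hy' : J' * y' = -(yᵀ * exK k ℓ * w))
    (hx : wᵀ * exK k ℓ * x + y'ᵀ * J' * y' + xᵀ * exK k ℓ * w = 0) (hdet : z.det * w.det = 1) :
    blk3 z y x 0 1 y' 0 0 w ∈ SO (Jmat ℓ J') := by
  refine ⟨?_, by rw [det_blk3_of_upper, det_one, mul_one, hdet]⟩
  rw [Jmat, blk3_transpose, blk3_mul, blk3_mul]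
  simp only [Matrix.mul_zero, Matrix.zero_mul, Matrix.mul_one, Matrix.one_mul,
    transpose_zero, transpose_one, add_zero, zero_add]
  have hwz : wᵀ * exK k ℓ * z = exK k ℓ := by
    simpa only [transpose_mul, transpose_transpose, exK_transpose, Matrix.mul_assoc]
      using congrArg transpose hzw
  have hy'T : y'ᵀ * J' = -(wᵀ * exK k ℓ * y) := by
    simpa only [transpose_mul, transpose_neg, hJ', exK_transpose, transpose_transpose,
      Matrix.mul_assoc] using congrArg transpose hy'
  rw [hzw, hwz, hy', neg_add_cancel, hx, hy'T, add_neg_cancel]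

lemma exists_blk3_mem_SO_Jmat {ℓ d : ℕ} (h2 : (2 : k) ≠ 0) {J' : Matrix (Fin d) (Fin d) k}
    (hJ' : J'ᵀ = J') (hJ'inv : IsUnit J'.det) {z : Matrix (Fin ℓ) (Fin ℓ) k} (hz : IsUnit z.det)
    (y : Matrix (Fin ℓ) (Fin d) k) : ∃ x y' w, blk3 z y x 0 1 y' 0 0 w ∈ SO (Jmat ℓ J') := by
  obtain ⟨w, hzw, hdet⟩ := exists_transpose_mul_mul_eq hz (isUnit_det_exK ℓ)
  set y' := -(J'⁻¹ * (yᵀ * exK k ℓ * w))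
  have hy' : J' * y' = -(yᵀ * exK k ℓ * w) := by
    rw [Matrix.mul_neg, mul_nonsing_inv_cancel_left _ _ hJ'inv]
  have hwK : IsUnit (wᵀ * exK k ℓ).det := by
    rw [det_mul, det_transpose]
    exact (IsUnit.of_mul_eq_one_right _ hdet).mul (isUnit_det_exK ℓ)
  have hS : (-(y'ᵀ * J' * y'))ᵀ = -(y'ᵀ * J' * y') := by
    rw [transpose_neg, transpose_mul, transpose_mul, transpose_transpose, hJ', Matrix.mul_assoc]
  obtain ⟨x, hx⟩ := exists_mul_add_transpose_eq h2 hwK hS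
  refine ⟨x, y', w, blk3_mem_SO_Jmat hJ' hzw hy' ?_ hdet⟩
  rw [transpose_mul, transpose_mul, transpose_transpose, exK_transpose, ← Matrix.mul_assoc] at hx
  rw [add_right_comm, hx, neg_add_cancel]

theorem Vl_proj_surjective_general {k : Type*} [Field k] {ℓ d : ℕ}
    (hchar : ringChar k ≠ 2)
    (J' : Matrix (Fin d) (Fin d) k) (hJ'sym : J'ᵀ = J') (hJ'inv : IsUnit J') :
    ∀ (z : Matrix (Fin ℓ) (Fin ℓ) k), IsUnitri z → ∀ (y : Matrix (Fin ℓ) (Fin d) k),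
      (∃ x y' w, blk3 z y x 0 1 y' 0 0 w ∈ Vl ℓ J') ∧
      (∃ g ∈ Vl ℓ J', zBlk g = z ∧ yBlk g = y) := by
  intro z hz y
  have hzdet : IsUnit z.det := hz.det_eq_one ▸ isUnit_one
  obtain ⟨x, y', w, hSO⟩ := exists_blk3_mem_SO_Jmat (Ring.two_ne_zero hchar) hJ'sym
    ((isUnit_iff_isUnit_det J').mp hJ'inv) hzdet y
  have hV : blk3 z y x 0 1 y' 0 0 w ∈ Vl ℓ J' := ⟨hSO, z, y, x, y', w, hz, rfl⟩
  exact ⟨⟨x, y', w, hV⟩, _, hV, zBlk_blk3 .., yBlk_blk3 ..⟩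

/-- if `char k ≠ 2`, every pair `(z, y)` with `z ∈ Z_ℓ` can be completed to an
element of `V_ℓ`; equivalently, the projection `V_ℓ → Z_ℓ × Mat_{ℓ×d}(k)`, `g ↦ (z, y)`,
is surjective. -/
theorem Vl_proj_surjective {k : Type*} [Field k] {ℓ d : ℕ} (hl : 0 < ℓ) (hd : 0 < d)
    (hchar : ringChar k ≠ 2)
    (J' : Matrix (Fin d) (Fin d) k) (hJ'sym : J'ᵀ = J') (hJ'inv : IsUnit J') :
    ∀ (z : Matrix (Fin ℓ) (Fin ℓ) k), IsUnitri z → ∀ (y : Matrix (Fin ℓ) (Fin d) k),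
      (∃ x y' w, blk3 z y x 0 1 y' 0 0 w ∈ Vl ℓ J') ∧
      (∃ g ∈ Vl ℓ J', zBlk g = z ∧ yBlk g = y) :=
  Vl_proj_surjective_general hchar J' hJ'sym hJ'inv
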